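/- Let p be a place of an RPN with marking M_R(p) (a finite graph of token instances and bonds), and define the corresponding CPN marking M_C(p) as the multiset assigning 1 to each connected component of M_R(p) and multiplicity 𝕂 − #ConCom(M_R(p)) to the idle token (∅,∅), where 𝕂 ≥ #ConCom(M_R(p)). Then this correspondence is injective: if two RPN markings at p yield the same CPN multiset, the RPN markings are equal. -/

import Mathlib

open SimpleGraph

/-- The connected components of an RPN place marking (modelled as a subgraph `H` of the
complete graph on all token instances), each represented as a pair
(vertex set, set of bonds within the component). -/
def compPairs {α : Type*} (H : (⊤ : SimpleGraph α).Subgraph) :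
    Set (Set α × Set (Sym2 α)) :=
  {q | ∃ C : H.coe.ConnectedComponent,
      q.1 = Subtype.val '' C.supp ∧
      q.2 = {e ∈ H.edgeSet | ∀ v ∈ e, v ∈ Subtype.val '' C.supp}}

open Classical in
/-- The CPN marking corresponding to an RPN place marking `H`: the multiset (given by its
count function) assigning 1 to each connected component of `H` and multiplicity
`𝕂 − #ConCom(H)` to the idle token `(∅, ∅)`. -/
noncomputable def cpnMark {α : Type*} (K : ℕ) (H : (⊤ : SimpleGraph α).Subgraph) :
    (Set α × Set (Sym2 α)) → ℕ :=
  fun q =>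
    (if q ∈ compPairs H then 1 else 0) +
    (if q = (∅, ∅) then K - Nat.card H.coe.ConnectedComponent else 0)

/-!
A marking is the union of its connected components, in vertices and in bonds alike, so it is
determined by its set of components. That set is the set of non-idle tokens of the CPN marking:
every component is nonempty, hence never equal to the idle token `(∅, ∅)`.
-/

namespace SimpleGraph.Subgraph

variable {α : Type*}

lemma mem_image_supp_connectedComponentMk {G : SimpleGraph α} {H : G.Subgraph} (v : H.verts) :
    (v : α) ∈ Subtype.val '' (H.coe.connectedComponentMk v).supp :=
  ⟨v, rfl, rfl⟩

lemma biUnion_compPairs_fst (H : (⊤ : SimpleGraph α).Subgraph) :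
    ⋃ q ∈ compPairs H, q.1 = H.verts := by
  ext v
  simp only [Set.mem_iUnion, exists_prop]
  constructor
  · rintro ⟨q, ⟨C, hq, -⟩, hv⟩
    obtain ⟨w, -, rfl⟩ := hq ▸ hv
    exact w.2
  · intro hv
    exact ⟨(_, _), ⟨H.coe.connectedComponentMk ⟨v, hv⟩, rfl, rfl⟩,
      mem_image_supp_connectedComponentMk ⟨v, hv⟩⟩

lemma biUnion_compPairs_snd (H : (⊤ : SimpleGraph α).Subgraph) :
    ⋃ q ∈ compPairs H, q.2 = H.edgeSet := by
  ext e
  simp only [Set.mem_iUnion, exists_prop]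
  constructor
  · rintro ⟨q, ⟨C, -, hq⟩, he⟩
    exact (hq ▸ he).1
  · induction e using Sym2.ind with
    | _ a b => ?_
    intro hab
    have hadj : H.coe.Adj ⟨a, hab.fst_mem⟩ ⟨b, hab.snd_mem⟩ := hab
    refine ⟨(_, _), ⟨H.coe.connectedComponentMk ⟨a, hab.fst_mem⟩, rfl, rfl⟩, hab, ?_⟩
    intro w hw
    rcases Sym2.mem_iff.mp hw with rfl | rfl
    · exact mem_image_supp_connectedComponentMk _
    · rw [ConnectedComponent.sound hadj.reachable]
      exact mem_image_supp_connectedComponentMk _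

lemma compPairs_injective : Function.Injective (compPairs (α := α)) := by
  intro H₁ H₂ h
  refine Subgraph.ext ?_ ?_
  · rw [← biUnion_compPairs_fst, h, biUnion_compPairs_fst]
  · ext a b
    rw [← Subgraph.mem_edgeSet, ← Subgraph.mem_edgeSet, ← biUnion_compPairs_snd, h,
      biUnion_compPairs_snd]

lemma idle_notMem_compPairs (H : (⊤ : SimpleGraph α).Subgraph) :
    ((∅, ∅) : Set α × Set (Sym2 α)) ∉ compPairs H := by
  rintro ⟨C, hC, -⟩
  induction C using ConnectedComponent.ind with | h v => ?_
  have hv := mem_image_supp_connectedComponentMk v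
  rw [← hC] at hv
  exact hv

lemma compPairs_eq_setOf_cpnMark_ne_zero (K : ℕ) (H : (⊤ : SimpleGraph α).Subgraph) :
    compPairs H = {q | q ≠ (∅, ∅) ∧ cpnMark K H q ≠ 0} := by
  ext q
  by_cases hq : q = (∅, ∅)
  · simp [hq, idle_notMem_compPairs]
  · by_cases hmem : q ∈ compPairs H <;> simp [cpnMark, hq, hmem]

end SimpleGraph.Subgraph

theorem stmt14_general {α : Type*} (K : ℕ)
    (H₁ H₂ : (⊤ : SimpleGraph α).Subgraph)
    (heq : cpnMark K H₁ = cpnMark K H₂) : H₁ = H₂ :=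
  Subgraph.compPairs_injective <| by
    rw [Subgraph.compPairs_eq_setOf_cpnMark_ne_zero K, heq,
      ← Subgraph.compPairs_eq_setOf_cpnMark_ne_zero K]

/-- The RPN-to-CPN state translation at a place is injective: if two RPN
markings yield the same CPN multiset (components plus idle tokens up to 𝕂), the RPN
markings are equal. -/
theorem stmt14 {α : Type*} [Fintype α] (K : ℕ)
    (H₁ H₂ : (⊤ : SimpleGraph α).Subgraph)
    (h₁ : Nat.card H₁.coe.ConnectedComponent ≤ K)
    (h₂ : Nat.card H₂.coe.ConnectedComponent ≤ K)
    (heq : cpnMark K H₁ = cpnMark K H₂) : H₁ = H₂ :=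
  stmt14_general K H₁ H₂ heq
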